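/- Let v ∈ Z^n have pairwise distinct components, and let {Y_w^v : w ∈ S_n} be the associated Yang–Baxter basis of H_n. Set u = [v_n, v_{n−1}, …, v_1] and define Ŷ_w^v := T_ω · Y_{ωw}^u for w ∈ S_n, where ω is the permutation of maximal length in S_n. Then {Ŷ_w^v} is the adjoint basis of {Y_w^v} with respect to the scalar product: (Y_w^v, Ŷ_{w'}^v) = δ_{w,w'} for all w, w' ∈ S_n. -/

import Mathlib

open scoped BigOperators
open Finset

namespace HeckePaper

noncomputable section

/-- The Coxeter length of a permutation of `Fin n`, i.e. its number of inversions. -/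
def len {n : ℕ} (w : Equiv.Perm (Fin n)) : ℕ :=
  (Finset.univ.filter fun p : Fin n × Fin n => p.1 < p.2 ∧ w p.2 < w p.1).card

/-- The adjacent transposition exchanging `i` and `i+1` (`0`-based), i.e. the
Coxeter generator `s_{i+1} = T_{i+1}` in the (1-based) notation of the paper;
defined to be `1` when out of range. -/
def adj (n i : ℕ) : Equiv.Perm (Fin n) :=
  if h : i + 1 < n then Equiv.swap ⟨i, by omega⟩ ⟨i + 1, h⟩ else 1

/-- The q-integer `[k] = (q^k - q^{-k})/(q - q⁻¹) = q^{k-1} + q^{k-3} + ⋯ + q^{1-k}`. -/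
def qint {R : Type} [CommRing R] (q : Rˣ) (k : ℤ) : R :=
  if 0 ≤ k then ∑ j ∈ Finset.range k.toNat, ((q ^ (k - 1 - 2 * (j : ℤ)) : Rˣ) : R)
  else - ∑ j ∈ Finset.range (-k).toNat, ((q ^ (-k - 1 - 2 * (j : ℤ)) : Rˣ) : R)

/-- `Q = q - q⁻¹`. -/
def Qv (R : Type) [CommRing R] (q : Rˣ) : R := (q : R) - ((q⁻¹ : Rˣ) : R)

/-- A realization of the Hecke algebra `H_n` of the symmetric group `S_n` over `R`:
an `R`-algebra `H` with a basis `{T_w : w ∈ S_n}` such that `T_u T_v = T_{uv}`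
whenever lengths add, and the Hecke quadratic relations
`T_i² = (q - q⁻¹) T_i + 1` hold for the generators. -/
structure HeckeAlgebra (n : ℕ) (R : Type) [CommRing R] (q : Rˣ) (H : Type)
    [Ring H] [Algebra R H] where
  T : Equiv.Perm (Fin n) → H
  basis : Module.Basis (Equiv.Perm (Fin n)) R H
  basis_eq : ∀ w, basis w = T w
  T_one : T 1 = 1
  T_mul : ∀ u v : Equiv.Perm (Fin n), len (u * v) = len u + len v →
    T u * T v = T (u * v)
  T_sq : ∀ i : ℕ, i + 1 < n →
    T (adj n i) * T (adj n i) = Qv R q • T (adj n i) + 1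

/-- The Young subgroup `S_I` of `S_n` associated with a composition `I` of `n`:
permutations preserving each block of the composition. -/
def youngSubgroup {n : ℕ} (c : Composition n) : Subgroup (Equiv.Perm (Fin n)) where
  carrier := {w | ∀ i, c.index (w i) = c.index i}
  one_mem' := fun _ => rfl
  mul_mem' := by
    intro a b ha hb i
    have hb' := hb i
    have ha' := ha (b i)
    simpa [Equiv.Perm.mul_apply, hb'] using ha'
  inv_mem' := by
    intro a ha i
    have := ha (a⁻¹ i)
    simpa using this.symm

/-- `w` is the minimal-length representative of its coset `w·S_I`. -/
def IsMinCosetRep {n : ℕ} (c : Composition n) (w : Equiv.Perm (Fin n)) : Prop :=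
  ∀ u ∈ youngSubgroup c, len w ≤ len (w * u)

/-- `w` is of maximal length in its coset `w·S_I`. -/
def IsMaxCosetRep {n : ℕ} (c : Composition n) (w : Equiv.Perm (Fin n)) : Prop :=
  ∀ u ∈ youngSubgroup c, len (w * u) ≤ len w

/-- The set of minimal-length representatives of the cosets `S_n/S_I`. -/
def minCosetReps {n : ℕ} (c : Composition n) : Finset (Equiv.Perm (Fin n)) :=
  @Finset.filter _ (IsMinCosetRep c) (Classical.decPred _) Finset.univ

/-- The word `[a+m-2, …, a+1, a]` (so that the corresponding product of adjacent
transpositions is the block cyclic permutation `ζ_m` shifted by `a`). -/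
def zetaWordBlock (a m : ℕ) : List ℕ := (List.range (m - 1)).reverse.map (a + ·)

/-- The reduced word of the permutation `w_J` (whose Hecke element is `ζ_J`),
for a composition `J` of `n`. -/
def zetaWord {n : ℕ} (c : Composition n) : List ℕ :=
  (List.ofFn fun k : Fin c.length =>
    zetaWordBlock (c.sizeUpTo k) (c.blocksFun k)).flatten

/-- The permutation `w_J`, a minimal-length representative of the conjugacy
class corresponding to the composition `J`; `ζ_J = T_{w_J}`. -/
def zetaPerm {n : ℕ} (c : Composition n) : Equiv.Perm (Fin n) :=
  ((zetaWord c).map (adj n)).prod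

/-- The composition of `n` obtained by sorting the parts of a partition of `n`
in decreasing order. -/
def partComp {n : ℕ} (μ : n.Partition) : Composition n where
  blocks := μ.parts.sort (· ≥ ·)
  blocks_pos := by
    intro i hi
    exact μ.parts_pos (by rwa [Multiset.mem_sort] at hi)
  blocks_sum := by
    have h : ((μ.parts.sort (· ≥ ·) : List ℕ) : Multiset ℕ) = μ.parts :=
      Multiset.sort_eq _ _
    calc (μ.parts.sort (· ≥ ·)).sum
        = ((μ.parts.sort (· ≥ ·) : List ℕ) : Multiset ℕ).sum := by
          rw [Multiset.sum_coe]
      _ = μ.parts.sum := by rw [h]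
      _ = n := μ.parts_sum

/-- `m` is a partial sum `j_1 + ⋯ + j_k` of the composition `J`. -/
def IsPartialSum {n : ℕ} (c : Composition n) (m : ℕ) : Prop :=
  ∃ k ≤ c.length, c.sizeUpTo k = m

/-- `w` has a recoil at `a` (0-based; i.e. at `i = a+1` in the 1-based notation of
the paper): the value `a+1` occurs to the left of the value `a` in the one-line
word of `w`. -/
def Recoil {n : ℕ} (w : Equiv.Perm (Fin n)) (a : ℕ) : Prop :=
  ∀ h : a + 1 < n, w⁻¹ ⟨a + 1, h⟩ < w⁻¹ ⟨a, by omega⟩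

namespace HeckeAlgebra

variable {n : ℕ} {R : Type} [CommRing R] {q : Rˣ} {H : Type} [Ring H] [Algebra R H]
variable (𝒜 : HeckeAlgebra n R q H)

/-- The scalar product on `H_n` for which the basis `{T_w}` is orthonormal. -/
def scalar (x y : H) : R :=
  ∑ w : Equiv.Perm (Fin n), 𝒜.basis.repr x w * 𝒜.basis.repr y w

/-- The normalization map `N_I : H(S_I) → H_n`,
`h ↦ Σ_w T_w h T_{w⁻¹}` (sum over the minimal-length coset representatives of
`S_n/S_I`). -/
def norm (c : Composition n) (h : H) : H :=
  ∑ w ∈ minCosetReps c, 𝒜.T w * h * 𝒜.T w⁻¹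

/-- The product `T_{a_1} T_{a_2} ⋯` in the Hecke algebra associated with a word
(list of 0-based indices of the generators). -/
def wordT (l : List ℕ) : H := (l.map fun a => 𝒜.T (adj n a)).prod

/-- The Hecke element `ζ_J = T_{w_J}` of a composition `J`. -/
def zeta (c : Composition n) : H := 𝒜.T (zetaPerm c)

end HeckeAlgebra


/-- The family `{Y_w}` is the Yang–Baxter family associated with the spectral
vector `v` (the scalars `q^k/[k]` being expressed using a chosen system `inv`
of inverses of the q-integers): `Y_1 = 1` and
`Y_{w·sᵢ} = Y_w · (T_i − q^k/[k])` whenever `ℓ(w·sᵢ) = ℓ(w) + 1`, where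
`k = v_{w(i+1)} − v_{w(i)}`. -/
def IsYangBaxterFamily {n : ℕ} {R : Type} [CommRing R] {q : Rˣ} {H : Type}
    [Ring H] [Algebra R H] (𝒜 : HeckeAlgebra n R q H)
    (v : Fin n → ℤ) (inv : ℤ → R) (Y : Equiv.Perm (Fin n) → H) : Prop :=
  Y 1 = 1 ∧
  ∀ (w : Equiv.Perm (Fin n)) (i : ℕ) (h : i + 1 < n),
    len (w * adj n i) = len w + 1 →
    Y (w * adj n i) = Y w * (𝒜.T (adj n i) -
      algebraMap R H
        (((q ^ (v (w ⟨i + 1, h⟩) - v (w ⟨i, by omega⟩)) : Rˣ) : R) *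
          inv (v (w ⟨i + 1, h⟩) - v (w ⟨i, by omega⟩))))

/-!
Write `c_k = q^k/[k]` and argue by induction on `ℓ(w)`. If `w = w̃ sᵢ` with
`ℓ(w) = ℓ(w̃) + 1`, then `Y_w = Y_{w̃}(Tᵢ − c_k)` with `k = v_{w̃(i+1)} − v_{w̃(i)}`, and right
multiplication by `Tᵢ` is self-adjoint, so `(Y_w, Ŷ_{w'}) = (Y_{w̃}, Ŷ_{w'}(Tᵢ − c_k))`. Let
`k' = v_{w'(i+1)} − v_{w'(i)}`; replacing `c_k` by `c_{k'}` changes nothing, because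
`(Y_{w̃}, Ŷ_{w'}) = 0` unless `w̃ = w'`. As `w' ↦ ωw'` exchanges ascents and descents, the
recursion for `Y^u` gives `Ŷ_{w'}(Tᵢ − c_{k'}) = Ŷ_{w'sᵢ}` when `w'` has a descent at `i`;
otherwise `Ŷ_{w'} = Ŷ_{w'sᵢ}(Tᵢ − c_{-k'})`, and since `c_{k'} + c_{-k'} = q − q⁻¹` the product
`(Tᵢ − c_{-k'})(Tᵢ − c_{k'})` is a scalar. In the base case `w = 1` the pairing is the
coefficient of `T_ω` in `Y^u_{ωw'}`, which is `δ_{w',1}` because the Yang–Baxter basis is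
unitriangular with respect to length.
-/

section Length

variable {n : ℕ}

lemma adj_eq {i : ℕ} (h : i + 1 < n) : adj n i = Equiv.swap ⟨i, by omega⟩ ⟨i + 1, h⟩ :=
  dif_pos h

@[simp]
lemma adj_mul_self (i : ℕ) : adj n i * adj n i = 1 := by
  unfold adj
  split_ifs
  · exact Equiv.swap_mul_self _ _
  · rfl

@[simp]
lemma adj_inv (i : ℕ) : (adj n i)⁻¹ = adj n i :=
  inv_eq_of_mul_eq_one_left (adj_mul_self i)

@[simp]
lemma adj_adj (i : ℕ) (p : Fin n) : adj n i (adj n i p) = p := by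
  rw [← Equiv.Perm.mul_apply, adj_mul_self, Equiv.Perm.one_apply]

@[simp]
lemma mul_adj_mul_adj (w : Equiv.Perm (Fin n)) (i : ℕ) : w * adj n i * adj n i = w := by
  rw [mul_assoc, adj_mul_self, mul_one]

lemma adj_apply_left {i : ℕ} (h : i + 1 < n) : adj n i ⟨i, by omega⟩ = ⟨i + 1, h⟩ := by
  rw [adj_eq h, Equiv.swap_apply_left]

lemma adj_apply_right {i : ℕ} (h : i + 1 < n) : adj n i ⟨i + 1, h⟩ = ⟨i, by omega⟩ := by
  rw [adj_eq h, Equiv.swap_apply_right]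

lemma mul_adj_eq_iff {u v : Equiv.Perm (Fin n)} {i : ℕ} : u * adj n i = v ↔ u = v * adj n i := by
  rw [← eq_mul_inv_iff_mul_eq, adj_inv]

lemma adj_mul_eq_iff {u v : Equiv.Perm (Fin n)} {i : ℕ} : adj n i * u = v ↔ u = adj n i * v := by
  rw [← eq_inv_mul_iff_mul_eq, adj_inv]

lemma val_adj {i : ℕ} (h : i + 1 < n) (p : Fin n) :
    (adj n i p : ℕ) = if (p : ℕ) = i then i + 1 else if (p : ℕ) = i + 1 then i else p := by
  rw [adj_eq h, Equiv.swap_apply_def]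
  split_ifs <;> simp_all [Fin.ext_iff]

lemma adj_lt_adj {i : ℕ} (h : i + 1 < n) {p r : Fin n} (hpr : p < r)
    (hne : (p, r) ≠ (⟨i, by omega⟩, ⟨i + 1, h⟩)) : adj n i p < adj n i r := by
  simp only [ne_eq, Prod.mk.injEq, Fin.ext_iff] at hne
  rw [Fin.lt_def] at hpr ⊢
  rw [val_adj h, val_adj h]
  split_ifs <;> omega

lemma len_one : len (1 : Equiv.Perm (Fin n)) = 0 := by
  rw [len, Finset.card_eq_zero]
  exact Finset.filter_false_of_mem fun p _ hp => lt_asymm hp.1 hp.2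

/-- Right multiplication by `sᵢ` permutes the inversions other than `(i, i+1)`. -/
lemma len_mul_adj_of_lt (w : Equiv.Perm (Fin n)) {i : ℕ} (h : i + 1 < n)
    (hw : w ⟨i, by omega⟩ < w ⟨i + 1, h⟩) : len (w * adj n i) = len w + 1 := by
  set e : Fin n × Fin n := (⟨i, by omega⟩, ⟨i + 1, h⟩)
  have he : e ∈ univ.filter fun p : Fin n × Fin n =>
      p.1 < p.2 ∧ (w * adj n i) p.2 < (w * adj n i) p.1 := by
    simp [e, adj_eq h, hw]
  rw [len, len, ← Finset.card_erase_add_one he]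
  congr 1
  refine Finset.card_bij' (fun p _ => (adj n i p.1, adj n i p.2))
    (fun p _ => (adj n i p.1, adj n i p.2)) ?_ ?_ (by simp) (by simp)
  · rintro ⟨p, r⟩ hp
    rw [Finset.mem_erase, Finset.mem_filter, Equiv.Perm.mul_apply, Equiv.Perm.mul_apply] at hp
    rw [Finset.mem_filter]
    exact ⟨Finset.mem_univ _, adj_lt_adj h hp.2.2.1 hp.1, hp.2.2.2⟩
  · rintro ⟨p, r⟩ hp
    obtain ⟨-, hpr, hwpr⟩ : (p, r) ∈ univ ∧ p < r ∧ w r < w p := Finset.mem_filter.1 hp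
    have hpe : (p, r) ≠ e := by
      intro hpe
      obtain ⟨rfl, rfl⟩ := Prod.mk.inj hpe
      exact lt_asymm hw hwpr
    rw [Finset.mem_erase, Finset.mem_filter, Equiv.Perm.mul_apply, Equiv.Perm.mul_apply,
      adj_adj, adj_adj]
    refine ⟨fun he' => ?_, Finset.mem_univ _, adj_lt_adj h hpr hpe, hwpr⟩
    simp only [e, Prod.mk.injEq, Fin.ext_iff, val_adj h] at he'
    rw [Fin.lt_def] at hpr
    split_ifs at he' <;> omega

lemma len_mul_adj_of_gt (w : Equiv.Perm (Fin n)) {i : ℕ} (h : i + 1 < n)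
    (hw : w ⟨i + 1, h⟩ < w ⟨i, by omega⟩) : len (w * adj n i) + 1 = len w := by
  simpa using (len_mul_adj_of_lt (w * adj n i) h (by simpa [adj_eq h] using hw)).symm

lemma len_mul_adj_cases (w : Equiv.Perm (Fin n)) {i : ℕ} (h : i + 1 < n) :
    len (w * adj n i) = len w + 1 ∨ len (w * adj n i) + 1 = len w :=
  (w.injective.ne (by simp [Fin.ext_iff])).lt_or_gt.imp (len_mul_adj_of_lt w h)
    (len_mul_adj_of_gt w h)

lemma exists_len_mul_adj_lt {w : Equiv.Perm (Fin n)} (hw : w ≠ 1) :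
    ∃ i, i + 1 < n ∧ len (w * adj n i) + 1 = len w := by
  by_contra! hasc
  refine hw (Equiv.ext fun x => congrFun (StrictMono.eq_id ?_) x)
  obtain _ | m := n
  · exact fun x => x.elim0
  refine Fin.strictMono_iff_lt_succ.2 fun j => ?_
  refine (w.injective.ne (Fin.castSucc_lt_succ (i := j)).ne).lt_or_gt.resolve_right fun hj => ?_
  exact hasc j (by omega) (len_mul_adj_of_gt w (i := j) (by omega) hj)

theorem adj_induction {motive : Equiv.Perm (Fin n) → Prop} (one : motive 1)
    (mul_adj : ∀ w i, i + 1 < n → len (w * adj n i) = len w + 1 → motive w →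
      motive (w * adj n i))
    (w : Equiv.Perm (Fin n)) : motive w := by
  induction hl : len w using Nat.strong_induction_on generalizing w with
  | _ m ih =>
    rcases eq_or_ne w 1 with rfl | hw
    · exact one
    obtain ⟨i, h, hi⟩ := exists_len_mul_adj_lt hw
    have := mul_adj (w * adj n i) i h (by rw [mul_adj_mul_adj, hi]) (ih _ (by omega) _ rfl)
    rwa [mul_adj_mul_adj] at this

lemma len_inv (w : Equiv.Perm (Fin n)) : len w⁻¹ = len w := by
  refine Finset.card_bij' (fun p _ => (w⁻¹ p.2, w⁻¹ p.1)) (fun p _ => (w p.2, w p.1))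
    ?_ ?_ (by simp) (by simp)
  all_goals
    rintro ⟨p, r⟩ hp
    simp only [Finset.mem_filter, Finset.mem_univ, true_and] at hp ⊢
    exact ⟨hp.2, by simpa using hp.1⟩

lemma len_adj_mul_cases (w : Equiv.Perm (Fin n)) {i : ℕ} (h : i + 1 < n) :
    len (adj n i * w) = len w + 1 ∨ len (adj n i * w) + 1 = len w := by
  rw [← len_inv, ← len_inv w, mul_inv_rev, adj_inv]
  exact len_mul_adj_cases w⁻¹ h

lemma len_adj {i : ℕ} (h : i + 1 < n) : len (adj n i) = 1 := by
  simpa [len_one] using len_mul_adj_of_lt 1 h (by simp [Fin.lt_def])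

/-- `ω = Fin.revPerm` turns the non-inversions of `w` into the inversions of `ω * w`. -/
lemma len_revPerm_mul_add_len (w : Equiv.Perm (Fin n)) :
    len (Fin.revPerm * w) + len w = len (Fin.revPerm : Equiv.Perm (Fin n)) := by
  have hpairs : ∀ w : Equiv.Perm (Fin n), len (Fin.revPerm * w) + len w =
      (univ.filter fun p : Fin n × Fin n => p.1 < p.2).card := by
    intro w
    rw [← Finset.card_filter_add_card_filter_not (fun p : Fin n × Fin n => ¬ w p.2 < w p.1),
      len, len, Finset.filter_filter, Finset.filter_filter]
    simp only [not_not]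
    congr 2
    refine Finset.filter_congr fun p _ => ?_
    simp only [Equiv.Perm.mul_apply, Fin.revPerm_apply, Fin.rev_lt_rev, and_congr_right_iff]
    exact fun hp => ⟨fun h => h.not_gt, fun h => (not_lt.1 h).lt_of_ne (w.injective.ne hp.ne)⟩
  rw [hpairs, ← hpairs 1, mul_one, len_one, add_zero]

end Length

section QInteger

variable {R : Type} [CommRing R] (q : Rˣ)

lemma Qv_mul_zpow (e : ℤ) :
    Qv R q * ((q ^ e : Rˣ) : R) = ((q ^ (e + 1) : Rˣ) : R) - ((q ^ (e - 1) : Rˣ) : R) := by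
  rw [Qv, zpow_add_one, zpow_sub_one, Units.val_mul, Units.val_mul]
  ring

/-- The sum defining `[k]` telescopes after multiplication by `q - q⁻¹`. -/
lemma Qv_mul_sum_range {k : ℤ} {m : ℕ} (hk : k = m) :
    Qv R q * ∑ j ∈ range m, ((q ^ (k - 1 - 2 * (j : ℤ)) : Rˣ) : R) =
      ((q ^ k : Rˣ) : R) - ((q ^ (-k) : Rˣ) : R) := by
  have hterm : ∀ j : ℕ, Qv R q * ((q ^ (k - 1 - 2 * (j : ℤ)) : Rˣ) : R) =
      ((q ^ (k - 2 * (j : ℤ)) : Rˣ) : R) - ((q ^ (k - 2 * ((j + 1 : ℕ) : ℤ)) : Rˣ) : R) := by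
    intro j
    rw [Qv_mul_zpow]
    congr 3 <;> push_cast <;> ring
  rw [Finset.mul_sum, Finset.sum_congr rfl fun j _ => hterm j, Finset.sum_range_sub', hk]
  congr 3
  ring

lemma Qv_mul_qint (k : ℤ) :
    Qv R q * qint q k = ((q ^ k : Rˣ) : R) - ((q ^ (-k) : Rˣ) : R) := by
  rw [qint]
  split_ifs with hk
  · exact Qv_mul_sum_range q (by omega)
  · rw [mul_neg, Qv_mul_sum_range q (by omega), neg_neg]
    abel

lemma qint_neg (k : ℤ) : qint q (-k) = -qint (R := R) q k := by
  rcases lt_trichotomy k 0 with hk | rfl | hk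
  · simp [qint, hk.le, hk.not_ge]
  · simp [qint]
  · simp [qint, hk.le, hk.not_ge]

end QInteger

namespace HeckeAlgebra

variable {n : ℕ} {R : Type} [CommRing R] {q : Rˣ} {H : Type} [Ring H] [Algebra R H]
variable (𝒜 : HeckeAlgebra n R q H)

lemma T_mul_T_adj_of_len {w : Equiv.Perm (Fin n)} {i : ℕ} (h : i + 1 < n)
    (hw : len (w * adj n i) = len w + 1) : 𝒜.T w * 𝒜.T (adj n i) = 𝒜.T (w * adj n i) :=
  𝒜.T_mul _ _ (by rw [hw, len_adj h])

lemma T_adj_mul_T_of_len {w : Equiv.Perm (Fin n)} {i : ℕ} (h : i + 1 < n)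
    (hw : len (adj n i * w) = len w + 1) : 𝒜.T (adj n i) * 𝒜.T w = 𝒜.T (adj n i * w) :=
  𝒜.T_mul _ _ (by rw [hw, len_adj h, add_comm])

lemma T_mul_T_adj (w : Equiv.Perm (Fin n)) {i : ℕ} (h : i + 1 < n) :
    𝒜.T w * 𝒜.T (adj n i) =
      𝒜.T (w * adj n i) + (if len (w * adj n i) < len w then Qv R q else 0) • 𝒜.T w := by
  rcases len_mul_adj_cases w h with hw | hw
  · rw [if_neg (by omega), zero_smul, add_zero, 𝒜.T_mul_T_adj_of_len h hw]
  · have hdown : 𝒜.T (w * adj n i) * 𝒜.T (adj n i) = 𝒜.T w := by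
      rw [𝒜.T_mul_T_adj_of_len h (by rw [mul_adj_mul_adj]; omega), mul_adj_mul_adj]
    rw [if_pos (by omega), ← hdown, mul_assoc, 𝒜.T_sq i h, mul_add, mul_one, mul_smul_comm,
      add_comm]

lemma T_adj_mul_T (w : Equiv.Perm (Fin n)) {i : ℕ} (h : i + 1 < n) :
    𝒜.T (adj n i) * 𝒜.T w =
      𝒜.T (adj n i * w) + (if len (adj n i * w) < len w then Qv R q else 0) • 𝒜.T w := by
  rcases len_adj_mul_cases w h with hw | hw
  · rw [if_neg (by omega), zero_smul, add_zero, 𝒜.T_adj_mul_T_of_len h hw]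
  · have hadj : adj n i * (adj n i * w) = w := by rw [← mul_assoc, adj_mul_self, one_mul]
    have hdown : 𝒜.T (adj n i) * 𝒜.T (adj n i * w) = 𝒜.T w := by
      rw [𝒜.T_adj_mul_T_of_len h (by rw [hadj]; omega), hadj]
    rw [if_pos (by omega), ← hdown, ← mul_assoc, 𝒜.T_sq i h, add_mul, one_mul, smul_mul_assoc,
      add_comm]

lemma scalar_comm (x y : H) : 𝒜.scalar x y = 𝒜.scalar y x := by
  simp only [scalar, mul_comm]

lemma scalar_add_left (x y z : H) : 𝒜.scalar (x + y) z = 𝒜.scalar x z + 𝒜.scalar y z := by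
  simp only [scalar, map_add, Finsupp.add_apply, add_mul, Finset.sum_add_distrib]

lemma scalar_smul_left (c : R) (x y : H) : 𝒜.scalar (c • x) y = c * 𝒜.scalar x y := by
  simp only [scalar, map_smul, Finsupp.smul_apply, smul_eq_mul, Finset.mul_sum, mul_assoc]

lemma scalar_sub_left (x y z : H) : 𝒜.scalar (x - y) z = 𝒜.scalar x z - 𝒜.scalar y z := by
  simp only [scalar, map_sub, Finsupp.sub_apply, sub_mul, Finset.sum_sub_distrib]

lemma scalar_add_right (x y z : H) : 𝒜.scalar x (y + z) = 𝒜.scalar x y + 𝒜.scalar x z := by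
  simp only [scalar_comm 𝒜 x, scalar_add_left]

lemma scalar_smul_right (c : R) (x y : H) : 𝒜.scalar x (c • y) = c * 𝒜.scalar x y := by
  simp only [scalar_comm 𝒜 x, scalar_smul_left]

lemma scalar_sub_right (x y z : H) : 𝒜.scalar x (y - z) = 𝒜.scalar x y - 𝒜.scalar x z := by
  simp only [scalar_comm 𝒜 x, scalar_sub_left]

lemma scalar_T_T (u v : Equiv.Perm (Fin n)) :
    𝒜.scalar (𝒜.T u) (𝒜.T v) = if u = v then 1 else 0 := by
  simp [scalar, ← 𝒜.basis_eq, Finsupp.single_apply]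

def scalarForm : H →ₗ[R] H →ₗ[R] R :=
  LinearMap.mk₂ R 𝒜.scalar 𝒜.scalar_add_left 𝒜.scalar_smul_left 𝒜.scalar_add_right
    𝒜.scalar_smul_right

lemma scalar_adjoint_of_basis (f g : H →ₗ[R] H)
    (hfg : ∀ u v, 𝒜.scalar (f (𝒜.T u)) (𝒜.T v) = 𝒜.scalar (𝒜.T u) (g (𝒜.T v))) (x y : H) :
    𝒜.scalar (f x) y = 𝒜.scalar x (g y) := by
  have hform : 𝒜.scalarForm.comp f = 𝒜.scalarForm.compl₂ g :=
    LinearMap.ext_basis 𝒜.basis 𝒜.basis fun u v => by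
      simpa [scalarForm, 𝒜.basis_eq] using hfg u v
  exact LinearMap.congr_fun₂ hform x y

lemma scalar_mul_T_adj {i : ℕ} (h : i + 1 < n) (x y : H) :
    𝒜.scalar (x * 𝒜.T (adj n i)) y = 𝒜.scalar x (y * 𝒜.T (adj n i)) := by
  refine 𝒜.scalar_adjoint_of_basis (.mulRight R _) (.mulRight R _) (fun u v => ?_) x y
  simp only [LinearMap.mulRight_apply, T_mul_T_adj 𝒜 _ h, scalar_add_left, scalar_add_right,
    scalar_smul_left, scalar_smul_right, scalar_T_T]
  by_cases huv : u = v
  · simp [huv]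
  · simp [huv, mul_adj_eq_iff]

lemma scalar_T_adj_mul {i : ℕ} (h : i + 1 < n) (x y : H) :
    𝒜.scalar (𝒜.T (adj n i) * x) y = 𝒜.scalar x (𝒜.T (adj n i) * y) := by
  refine 𝒜.scalar_adjoint_of_basis (.mulLeft R _) (.mulLeft R _) (fun u v => ?_) x y
  simp only [LinearMap.mulLeft_apply, T_adj_mul_T 𝒜 _ h, scalar_add_left, scalar_add_right,
    scalar_smul_left, scalar_smul_right, scalar_T_T]
  by_cases huv : u = v
  · simp [huv]
  · simp [huv, adj_mul_eq_iff]

lemma scalar_T_mul (u : Equiv.Perm (Fin n)) (x y : H) :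
    𝒜.scalar (𝒜.T u * x) y = 𝒜.scalar x (𝒜.T u⁻¹ * y) := by
  induction u using adj_induction generalizing x y with
  | one => simp [𝒜.T_one]
  | mul_adj u i h hu ih =>
    have hinv : len (adj n i * u⁻¹) = len u⁻¹ + 1 := by
      rw [← adj_inv, ← mul_inv_rev, len_inv, len_inv, hu]
    rw [← 𝒜.T_mul_T_adj_of_len h hu, mul_assoc, ih, scalar_T_adj_mul 𝒜 h, ← mul_assoc,
      𝒜.T_adj_mul_T_of_len h hinv, mul_inv_rev, adj_inv]

end HeckeAlgebra

/-- The scalar `q^k/[k]` of the Yang–Baxter recursion, with `inv k` standing for `[k]⁻¹`. -/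
def ybCoeff {R : Type} [CommRing R] (q : Rˣ) (inv : ℤ → R) (k : ℤ) : R :=
  ((q ^ k : Rˣ) : R) * inv k

lemma ybCoeff_add_ybCoeff_neg {R : Type} [CommRing R] {q : Rˣ} {inv : ℤ → R}
    (hinv : ∀ k : ℤ, k ≠ 0 → qint q k * inv k = 1) {k : ℤ} (hk : k ≠ 0) :
    ybCoeff q inv k + ybCoeff q inv (-k) = Qv R q := by
  have hneg : inv (-k) = -inv k := by
    have := hinv (-k) (neg_ne_zero.2 hk)
    rw [qint_neg] at this
    linear_combination (-inv k) * this - inv (-k) * hinv k hk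
  rw [ybCoeff, ybCoeff, hneg]
  linear_combination Qv R q * hinv k hk - inv k * Qv_mul_qint q k

namespace HeckeAlgebra

variable {n : ℕ} {R : Type} [CommRing R] {q : Rˣ} {H : Type} [Ring H] [Algebra R H]
variable (𝒜 : HeckeAlgebra n R q H) (inv : ℤ → R)

def ybFactor (i : ℕ) (k : ℤ) : H := 𝒜.T (adj n i) - algebraMap R H (ybCoeff q inv k)

lemma mul_ybFactor (x : H) (i : ℕ) (k : ℤ) :
    x * 𝒜.ybFactor inv i k = x * 𝒜.T (adj n i) - ybCoeff q inv k • x := by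
  rw [ybFactor, mul_sub, ← Algebra.commutes, ← Algebra.smul_def]

lemma mul_ybFactor_eq_add (x : H) (i : ℕ) (k l : ℤ) :
    x * 𝒜.ybFactor inv i k =
      x * 𝒜.ybFactor inv i l + (ybCoeff q inv l - ybCoeff q inv k) • x := by
  rw [mul_ybFactor, mul_ybFactor, sub_smul]
  abel

lemma mul_ybFactor_mul_ybFactor {i : ℕ} (h : i + 1 < n) {k l : ℤ}
    (hkl : ybCoeff q inv k + ybCoeff q inv l = Qv R q) (x : H) :
    x * 𝒜.ybFactor inv i k * 𝒜.ybFactor inv i l =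
      (1 + ybCoeff q inv k * ybCoeff q inv l) • x := by
  rw [mul_ybFactor, mul_ybFactor, sub_mul, mul_assoc x, 𝒜.T_sq i h, smul_mul_assoc, ← hkl,
    mul_add, mul_one, mul_smul_comm]
  module

lemma scalar_mul_ybFactor {i : ℕ} (h : i + 1 < n) (k : ℤ) (x y : H) :
    𝒜.scalar (x * 𝒜.ybFactor inv i k) y = 𝒜.scalar x (y * 𝒜.ybFactor inv i k) := by
  rw [mul_ybFactor, mul_ybFactor, scalar_sub_left, scalar_sub_right, scalar_smul_left,
    scalar_smul_right, scalar_mul_T_adj 𝒜 h]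

end HeckeAlgebra

namespace IsYangBaxterFamily

variable {n : ℕ} {R : Type} [CommRing R] {q : Rˣ} {H : Type} [Ring H] [Algebra R H]
variable {𝒜 : HeckeAlgebra n R q H} {v : Fin n → ℤ} {inv : ℤ → R} {Y : Equiv.Perm (Fin n) → H}

lemma mul_adj (hY : IsYangBaxterFamily 𝒜 v inv Y) {w : Equiv.Perm (Fin n)} {i : ℕ}
    (h : i + 1 < n) (hw : len (w * adj n i) = len w + 1) :
    Y (w * adj n i) = Y w * 𝒜.ybFactor inv i (v (w ⟨i + 1, h⟩) - v (w ⟨i, by omega⟩)) :=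
  hY.2 w i h hw

/-- `Y σ` is `T σ` plus terms `T x` with `len x < len σ`. -/
lemma scalar_T_of_len_le (hY : IsYangBaxterFamily 𝒜 v inv Y) (σ x : Equiv.Perm (Fin n))
    (hσx : len σ ≤ len x) : 𝒜.scalar (Y σ) (𝒜.T x) = if σ = x then 1 else 0 := by
  induction σ using adj_induction generalizing x with
  | one => rw [hY.1, ← 𝒜.T_one, 𝒜.scalar_T_T]
  | mul_adj σ i h hσ ih =>
    have hσx' : 𝒜.scalar (Y σ) (𝒜.T x) = 0 := by
      rw [ih x (by omega), if_neg]
      rintro rfl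
      omega
    have hxs : len σ ≤ len (x * adj n i) := by
      rcases len_mul_adj_cases x h with h' | h' <;> omega
    rw [hY.mul_adj h hσ, 𝒜.scalar_mul_ybFactor inv h, 𝒜.mul_ybFactor, 𝒜.T_mul_T_adj _ h,
      𝒜.scalar_sub_right, 𝒜.scalar_add_right, 𝒜.scalar_smul_right, 𝒜.scalar_smul_right, hσx',
      ih _ hxs]
    simp [mul_adj_eq_iff]

lemma scalar_T_revPerm (hY : IsYangBaxterFamily 𝒜 v inv Y) (σ : Equiv.Perm (Fin n)) :
    𝒜.scalar (Y σ) (𝒜.T Fin.revPerm) = if σ = Fin.revPerm then 1 else 0 :=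
  hY.scalar_T_of_len_le σ _ (by have := len_revPerm_mul_add_len σ; omega)

end IsYangBaxterFamily

namespace HeckeAlgebra

variable {n : ℕ} {R : Type} [CommRing R] {q : Rˣ} {H : Type} [Ring H] [Algebra R H]
variable (𝒜 : HeckeAlgebra n R q H) {v : Fin n → ℤ} {inv : ℤ → R} {Yu : Equiv.Perm (Fin n) → H}

/-- The family `Ŷ_w = T_ω · Yu_{ω w}`. -/
def dualFamily (Yu : Equiv.Perm (Fin n) → H) (w : Equiv.Perm (Fin n)) : H :=
  𝒜.T Fin.revPerm * Yu (Fin.revPerm * w)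

lemma scalar_one_dualFamily (hYu : IsYangBaxterFamily 𝒜 (fun p => v p.rev) inv Yu)
    (w : Equiv.Perm (Fin n)) : 𝒜.scalar 1 (𝒜.dualFamily Yu w) = if 1 = w then 1 else 0 := by
  rw [dualFamily, scalar_comm, scalar_T_mul, mul_one, Equiv.Perm.inv_def, Fin.revPerm_symm,
    hYu.scalar_T_revPerm]
  simp [eq_comm]

/-- Since `ω` reverses lengths, a descent of `w` is an ascent of `ω w`, where the recursion
for `Yu` applies, with the same spectral difference because `u = v ∘ rev`. -/
lemma dualFamily_mul_ybFactor_of_descent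
    (hYu : IsYangBaxterFamily 𝒜 (fun p => v p.rev) inv Yu) {w : Equiv.Perm (Fin n)} {i : ℕ}
    (h : i + 1 < n) (hw : len (w * adj n i) + 1 = len w) :
    𝒜.dualFamily Yu w * 𝒜.ybFactor inv i (v (w ⟨i + 1, h⟩) - v (w ⟨i, by omega⟩)) =
      𝒜.dualFamily Yu (w * adj n i) := by
  have hasc : len (Fin.revPerm * w * adj n i) = len (Fin.revPerm * w) + 1 := by
    have := len_revPerm_mul_add_len w
    have := len_revPerm_mul_add_len (w * adj n i)
    rw [mul_assoc]
    omega
  rw [dualFamily, dualFamily, ← mul_assoc Fin.revPerm w, hYu.mul_adj h hasc, mul_assoc]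
  simp [Fin.rev_rev]

lemma dualFamily_mul_ybFactor_of_ascent (hv : Function.Injective v)
    (hinv : ∀ k : ℤ, k ≠ 0 → qint q k * inv k = 1)
    (hYu : IsYangBaxterFamily 𝒜 (fun p => v p.rev) inv Yu) {w : Equiv.Perm (Fin n)} {i : ℕ}
    (h : i + 1 < n) (hw : len (w * adj n i) = len w + 1) :
    𝒜.dualFamily Yu w * 𝒜.ybFactor inv i (v (w ⟨i + 1, h⟩) - v (w ⟨i, by omega⟩)) =
      (1 + ybCoeff q inv (v (w ⟨i, by omega⟩) - v (w ⟨i + 1, h⟩)) *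
        ybCoeff q inv (v (w ⟨i + 1, h⟩) - v (w ⟨i, by omega⟩))) •
        𝒜.dualFamily Yu (w * adj n i) := by
  have hk : v (w ⟨i, by omega⟩) - v (w ⟨i + 1, h⟩) ≠ 0 :=
    sub_ne_zero.2 (hv.ne (w.injective.ne (by simp [Fin.ext_iff])))
  have hdesc :=
    𝒜.dualFamily_mul_ybFactor_of_descent hYu h (w := w * adj n i) (by simpa using hw.symm)
  simp only [Equiv.Perm.mul_apply, adj_apply_left h, adj_apply_right h, mul_adj_mul_adj] at hdesc
  rw [← hdesc, 𝒜.mul_ybFactor_mul_ybFactor inv h]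
  simpa using ybCoeff_add_ybCoeff_neg hinv hk

end HeckeAlgebra

namespace IsYangBaxterFamily

variable {n : ℕ} {R : Type} [CommRing R] {q : Rˣ} {H : Type} [Ring H] [Algebra R H]
variable {𝒜 : HeckeAlgebra n R q H} {v : Fin n → ℤ} {inv : ℤ → R} {Y Yu : Equiv.Perm (Fin n) → H}

lemma scalar_mul_adj_dualFamily (hv : Function.Injective v)
    (hinv : ∀ k : ℤ, k ≠ 0 → qint q k * inv k = 1) (hY : IsYangBaxterFamily 𝒜 v inv Y)
    (hYu : IsYangBaxterFamily 𝒜 (fun p => v p.rev) inv Yu) {w : Equiv.Perm (Fin n)} {i : ℕ}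
    (h : i + 1 < n) (hw : len (w * adj n i) = len w + 1)
    (ih : ∀ w', 𝒜.scalar (Y w) (𝒜.dualFamily Yu w') = if w = w' then 1 else 0)
    (w' : Equiv.Perm (Fin n)) :
    𝒜.scalar (Y (w * adj n i)) (𝒜.dualFamily Yu w') = if w * adj n i = w' then 1 else 0 := by
  set k := v (w ⟨i + 1, h⟩) - v (w ⟨i, by omega⟩)
  set k' := v (w' ⟨i + 1, h⟩) - v (w' ⟨i, by omega⟩)
  -- the pairing vanishes unless `w = w'`, and then `k = k'`
  have hshift :
      (ybCoeff q inv k' - ybCoeff q inv k) * 𝒜.scalar (Y w) (𝒜.dualFamily Yu w') = 0 := by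
    rw [ih]
    split_ifs with hww'
    · simp [k, k', hww']
    · rw [mul_zero]
  rw [hY.mul_adj h hw, 𝒜.scalar_mul_ybFactor inv h, 𝒜.mul_ybFactor_eq_add inv _ i k k',
    𝒜.scalar_add_right, 𝒜.scalar_smul_right, hshift, add_zero]
  rcases len_mul_adj_cases w' h with hw' | hw'
  · have hne : w ≠ w' * adj n i := fun he => by
      rw [he, mul_adj_mul_adj] at hw
      omega
    have hne' : w * adj n i ≠ w' := fun he => by
      rw [← he, mul_adj_mul_adj] at hw'
      omega
    rw [𝒜.dualFamily_mul_ybFactor_of_ascent hv hinv hYu h hw', 𝒜.scalar_smul_right, ih,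
      if_neg hne, if_neg hne', mul_zero]
  · rw [𝒜.dualFamily_mul_ybFactor_of_descent hYu h hw', ih]
    simp [mul_adj_eq_iff]

end IsYangBaxterFamily

/-- Yang–Baxter duality: if `{Y_w^v}` is the Yang–Baxter basis
attached to a vector `v ∈ ℤⁿ` with pairwise distinct components,
`u = [v_n, …, v_1]`, and `Ŷ_w^v := T_ω · Y^u_{ω·w}` where `ω` is the
permutation of maximal length, then `(Y_w^v, Ŷ_{w'}^v) = δ_{w,w'}`. -/
theorem yangBaxter_duality {n : ℕ} {R : Type} [CommRing R] {q : Rˣ} {H : Type}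
    [Ring H] [Algebra R H] (𝒜 : HeckeAlgebra n R q H)
    (v : Fin n → ℤ) (hv : Function.Injective v)
    (inv : ℤ → R) (hinv : ∀ k : ℤ, k ≠ 0 → qint q k * inv k = 1)
    (Y Yu : Equiv.Perm (Fin n) → H)
    (hY : IsYangBaxterFamily 𝒜 v inv Y)
    (hYu : IsYangBaxterFamily 𝒜 (fun p => v p.rev) inv Yu) :
    ∀ w w' : Equiv.Perm (Fin n),
      𝒜.scalar (Y w) (𝒜.T Fin.revPerm * Yu (Fin.revPerm * w')) =
        if w = w' then 1 else 0 := by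
  intro w
  induction w using adj_induction with
  | one =>
    rw [hY.1]
    exact 𝒜.scalar_one_dualFamily hYu
  | mul_adj w i h hw ih => exact hY.scalar_mul_adj_dualFamily hv hinv hYu h hw ih

end
end HeckePaper
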